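/- arXiv:1408.1296 — 3 statements merged into one kernel-verified Lean document; each statement's English description precedes it below -/
import Mathlib

section
/- Let X_1,...,X_n be n real-valued (possibly dependent) random variables with order statistics X_{1:n} ≤ ... ≤ X_{n:n}, and suppose Assumption B holds: the distribution function of X_{n:n} is long-tailed (X_{n:n} ∈ 𝓛), and there exists a function h ∈ 𝓗_{X_{n:n}} such that condition (DS1) holds for every t > 0 and condition (DS2) holds for some L > 0. Then for any 0 < a ≤ b < ∞ and 0 ≤ d < ∞, the relation P(∑_{i=0}^{n-1} c_i X_{n-i:n} > x) ~ P(c_0 X_{n:n} > x) ~ ∑_{i=1}^{n} P(c_0 X_i > x) as x → ∞ holds uniformly for (c_0, c_1, ..., c_{n-1}) ∈ [a,b] × [0,d]^{n-1}. -/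
open MeasureTheory Filter Topology Asymptotics

noncomputable section

/-- Tail probability `P(Y > x)` of a real random variable. -/
def tailP {Ω : Type*} [MeasurableSpace Ω] (μ : Measure Ω) (Y : Ω → ℝ) (x : ℝ) : ℝ :=
  (μ {ω | x < Y ω}).toReal

/-- The maximum `X_{n:n}` of finitely many random variables. -/
def maxRV {Ω : Type*} {n : ℕ} (X : Fin n → Ω → ℝ) (ω : Ω) : ℝ := ⨆ i, X i ω

/-- The `i`-th largest value (descending order statistic, `0`-indexed):
`ordDesc X i = X_{n-i:n}`. -/
def ordDesc {Ω : Type*} {n : ℕ} (X : Fin n → Ω → ℝ) (i : Fin n) (ω : Ω) : ℝ :=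
  (((List.ofFn fun j => X j ω).mergeSort fun a b => decide (b ≤ a)).getD i 0)

/-- A tail function `T = 1 - F` is long-tailed (`F ∈ 𝓛`). -/
def LongTailedT (T : ℝ → ℝ) : Prop :=
  (∀ x : ℝ, 0 ≤ x → 0 < T x) ∧
  ∀ y : ℝ, Tendsto (fun x => T (x + y) / T x) atTop (𝓝 1)

/-- A function is dominatedly varying. -/
def DomVarFun (h : ℝ → ℝ) : Prop :=
  ∀ y : ℝ, 0 < y →
    (0 : EReal) < atTop.liminf (fun x => ((h (x * y) / h x : ℝ) : EReal)) ∧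
    atTop.limsup (fun x => ((h (x * y) / h x : ℝ) : EReal)) < ⊤

/-- A function is weakly self-neglecting. -/
def WeaklySelfNeg (h : ℝ → ℝ) : Prop :=
  ∀ y : ℝ, atTop.limsup (fun x => ((h (x + y * h x) / h x : ℝ) : EReal)) < ⊤

/-- `h ∈ 𝓗_F` where `T = 1 - F` is the tail of `F`. -/
def MemScaleClass (T h : ℝ → ℝ) : Prop :=
  (∀ᶠ x in atTop, 0 < h x) ∧
  (h =o[atTop] fun x : ℝ => x) ∧
  (∀ y : ℝ, Tendsto (fun x => T (x + y * h x) / T x) atTop (𝓝 1)) ∧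
  WeaklySelfNeg h

/-- Upper endpoint `x_F = sup {x : F(x) < 1}` of a distribution with tail `T = 1 - F`. -/
def upEnd (T : ℝ → ℝ) : EReal := sSup ((fun x : ℝ => (x : EReal)) '' {x | 0 < T x})

open Classical in
/-- The filter of "`x → x_F`". -/
def endFilter (T : ℝ → ℝ) : Filter ℝ :=
  if upEnd T = ⊤ then atTop else 𝓝[<] (upEnd T).toReal

/-- `F ∈ GMDA(h)` for `T = 1 - F`. -/
def MemGMDA (T h : ℝ → ℝ) : Prop :=
  (∀ x, 0 < h x) ∧
  ∀ y : ℝ, Tendsto (fun x => T (x + y * h x) / T x) (endFilter T) (𝓝 (Real.exp (-y)))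

/-- Condition (DS1) (for all `t > 0`). -/
def DS1 {Ω : Type*} [MeasurableSpace Ω] (μ : Measure Ω) {n : ℕ} (X : Fin n → Ω → ℝ)
    (h : ℝ → ℝ) : Prop :=
  ∀ t : ℝ, 0 < t → ∀ i j : Fin n, i ≠ j →
    Tendsto (fun x => (μ {ω | t * h x < |X i ω| ∧ x < X j ω}).toReal / tailP μ (maxRV X) x)
      atTop (𝓝 0)

/-- Condition (DS2) for a given `L > 0`. -/
def DS2 {Ω : Type*} [MeasurableSpace Ω] (μ : Measure Ω) {n : ℕ} (X : Fin n → Ω → ℝ)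
    (h : ℝ → ℝ) (L : ℝ) : Prop :=
  ∀ i j : Fin n, i < j →
    Tendsto (fun x => (μ {ω | L * h x < X i ω ∧ L * h x < X j ω}).toReal / tailP μ (maxRV X) x)
      atTop (𝓝 0)

/-- Condition (v1). -/
def CondV1 {Ω : Type*} [MeasurableSpace Ω] (μ : Measure Ω) {n : ℕ} (X : Fin n → Ω → ℝ) : Prop :=
  ∀ i j : Fin n, i < j →
    Tendsto (fun x => (μ {ω | x < X i ω ∧ x < X j ω}).toReal / tailP μ (maxRV X) x)
      atTop (𝓝 0)

/-- Assumption A: `X_{n:n}` has an infinite upper endpoint, `X_{n:n} ∈ GMDA(h)`,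
(DS1) holds for all `t > 0` and (DS2) for some `L > 0`. -/
def AssumptionA {Ω : Type*} [MeasurableSpace Ω] (μ : Measure Ω) {n : ℕ}
    (X : Fin n → Ω → ℝ) : Prop :=
  ∃ h : ℝ → ℝ,
    (∀ x : ℝ, 0 < tailP μ (maxRV X) x) ∧
    MemGMDA (tailP μ (maxRV X)) h ∧
    DS1 μ X h ∧ ∃ L : ℝ, 0 < L ∧ DS2 μ X h L

/-- Assumption B: `X_{n:n} ∈ 𝓛` and some `h ∈ 𝓗_{X_{n:n}}` satisfies (DS1) for all `t > 0`
and (DS2) for some `L > 0`. -/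
def AssumptionB {Ω : Type*} [MeasurableSpace Ω] (μ : Measure Ω) {n : ℕ}
    (X : Fin n → Ω → ℝ) : Prop :=
  LongTailedT (tailP μ (maxRV X)) ∧
  ∃ h : ℝ → ℝ, MemScaleClass (tailP μ (maxRV X)) h ∧
    DS1 μ X h ∧ ∃ L : ℝ, 0 < L ∧ DS2 μ X h L

/-- Assumption C: `X_{n:n} ∈ 𝓛 ∩ 𝓓` and some dominatedly varying `h ∈ 𝓗_{X_{n:n}}`
satisfies (DS1) for all `t > 0`. -/
def AssumptionC {Ω : Type*} [MeasurableSpace Ω] (μ : Measure Ω) {n : ℕ}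
    (X : Fin n → Ω → ℝ) : Prop :=
  LongTailedT (tailP μ (maxRV X)) ∧ DomVarFun (tailP μ (maxRV X)) ∧
  ∃ h : ℝ → ℝ, DomVarFun h ∧ MemScaleClass (tailP μ (maxRV X)) h ∧ DS1 μ X h

/-- The uniform (in the weights `c ∈ K`) max-sum asymptotic equivalence (max-sum0):
`P(∑ c_i X_{n-i:n} > x) ~ P(c_0 X_{n:n} > x) ~ ∑ P(c_0 X_i > x)` uniformly on `K`. -/
def UnifMaxSum {Ω : Type*} [MeasurableSpace Ω] (μ : Measure Ω) {n : ℕ} [NeZero n]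
    (X : Fin n → Ω → ℝ) (K : Set (Fin n → ℝ)) : Prop :=
  TendstoUniformlyOn
    (fun x (c : Fin n → ℝ) =>
      tailP μ (fun ω => ∑ i, c i * ordDesc X i ω) x /
        tailP μ (fun ω => c 0 * maxRV X ω) x) 1 atTop K ∧
  TendstoUniformlyOn
    (fun x (c : Fin n → ℝ) =>
      tailP μ (fun ω => c 0 * maxRV X ω) x /
        ∑ i, tailP μ (fun ω => c 0 * X i ω) x) 1 atTop K

end

open Finset

/-!
Put `y = x / c₀`. If no two coordinates exceed `L h(y)`, every order statistic below the maximum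
is at most `L h(y)`, so the weighted sum exceeds `x` only if `X_{n:n} > y - κ h(y)`, where
`κ = (n - 1) d L / a`. Conversely, if `X_{n:n} > y + κ h(y)` and no other coordinate exceeds
`L h(y)` in absolute value, the weighted sum exceeds `x`. The exceptional events are negligible by
(DS2) and (DS1), and `P(X_{n:n} > y ± κ h(y)) ~ P(X_{n:n} > y)` because `h ∈ 𝓗`. The second
equivalence is Bonferroni's inequality together with (DS2), as `L h(y) < y` eventually. All bounds
depend on `c` only through `y ≥ x / b`, which makes the convergence uniform.
-/

section WeightedSum

variable {n : ℕ} [NeZero n] {c z : Fin n → ℝ} {d v : ℝ}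

theorem sum_mul_le_of_le (hc : ∀ i, i ≠ 0 → c i ∈ Set.Icc 0 d) (hv : 0 ≤ v)
    (hz : ∀ i, i ≠ 0 → z i ≤ v) :
    ∑ i, c i * z i ≤ c 0 * z 0 + (n - 1 : ℕ) * d * v := by
  rw [← add_sum_erase _ _ (mem_univ 0), mul_assoc]
  gcongr
  calc ∑ i ∈ univ.erase 0, c i * z i ≤ #(univ.erase (0 : Fin n)) • (d * v) := by
        refine sum_le_card_nsmul _ _ _ fun i hi => ?_
        have hi := ne_of_mem_erase hi
        exact (mul_le_mul_of_nonneg_left (hz i hi) (hc i hi).1).trans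
          (mul_le_mul_of_nonneg_right (hc i hi).2 hv)
    _ = (n - 1 : ℕ) * (d * v) := by simp [card_erase_of_mem]

theorem sub_le_sum_mul_of_le (hc : ∀ i, i ≠ 0 → c i ∈ Set.Icc 0 d) (hv : 0 ≤ v)
    (hz : ∀ i, i ≠ 0 → -v ≤ z i) :
    c 0 * z 0 - (n - 1 : ℕ) * d * v ≤ ∑ i, c i * z i := by
  rw [← add_sum_erase _ _ (mem_univ 0), mul_assoc, sub_eq_add_neg]
  gcongr
  calc -((n - 1 : ℕ) * (d * v)) = #(univ.erase (0 : Fin n)) • -(d * v) := by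
        simp [card_erase_of_mem]
    _ ≤ ∑ i ∈ univ.erase 0, c i * z i := by
        refine card_nsmul_le_sum _ _ _ fun i hi => ?_
        have hi := ne_of_mem_erase hi
        calc -(d * v) = d * -v := by ring
          _ ≤ c i * -v := mul_le_mul_of_nonpos_right (hc i hi).2 (neg_nonpos.mpr hv)
          _ ≤ c i * z i := mul_le_mul_of_nonneg_left (hz i hi) (hc i hi).1

end WeightedSum

namespace OrderStatistics

variable {Ω : Type*} {n : ℕ} (X : Fin n → Ω → ℝ) (ω : Ω)

noncomputable def sortedValues : List ℝ :=
  (List.ofFn fun j => X j ω).mergeSort fun a b => decide (b ≤ a)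

theorem length_sortedValues : (sortedValues X ω).length = n := by
  rw [sortedValues, List.length_mergeSort, List.length_ofFn]

theorem sortedValues_perm : (sortedValues X ω).Perm (List.ofFn fun j => X j ω) :=
  List.mergeSort_perm _ _

theorem pairwise_sortedValues : (sortedValues X ω).Pairwise fun a b => b ≤ a := by
  simpa [sortedValues] using List.pairwise_mergeSort (le := fun a b : ℝ => decide (b ≤ a))
    (fun a b c hab hbc => by simp only [decide_eq_true_eq] at *; exact hbc.trans hab)
    (fun a b => by simpa using le_total b a) (List.ofFn fun j => X j ω)

theorem ordDesc_eq_getElem (i : Fin n) :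
    ordDesc X i ω = (sortedValues X ω)[(i : ℕ)]'(by rw [length_sortedValues]; exact i.2) :=
  List.getD_eq_getElem _ _ _

theorem exists_eq_ordDesc (i : Fin n) : ∃ k, X k ω = ordDesc X i ω := by
  rw [← List.mem_ofFn, ← (sortedValues_perm X ω).mem_iff, ordDesc_eq_getElem]
  exact List.getElem_mem _

theorem le_ordDesc_of_forall_le {w : ℝ} (hw : ∀ k, w ≤ X k ω) (i : Fin n) :
    w ≤ ordDesc X i ω := by
  obtain ⟨k, hk⟩ := exists_eq_ordDesc X ω i
  exact hk ▸ hw k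

theorem le_maxRV (k : Fin n) : X k ω ≤ maxRV X ω :=
  le_ciSup (f := fun i => X i ω) (Set.finite_range _).bddAbove k

variable [NeZero n] {c : Fin n → ℝ} {d v : ℝ}

theorem le_ordDesc_zero (k : Fin n) : X k ω ≤ ordDesc X 0 ω := by
  obtain ⟨m, hm, hmk⟩ := List.getElem_of_mem
    ((sortedValues_perm X ω).mem_iff.mpr (List.mem_ofFn.mpr ⟨k, rfl⟩))
  rw [ordDesc_eq_getElem, ← hmk]
  rcases Nat.eq_zero_or_pos m with rfl | hm0
  · rfl
  · exact List.pairwise_iff_getElem.mp (pairwise_sortedValues X ω) _ _ _ _ hm0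

theorem maxRV_eq_ordDesc_zero : maxRV X ω = ordDesc X 0 ω := by
  obtain ⟨k, hk⟩ := exists_eq_ordDesc X ω 0
  exact le_antisymm (ciSup_le (le_ordDesc_zero X ω)) (hk ▸ le_maxRV X ω k)

theorem exists_lt_of_lt_maxRV (h : v < maxRV X ω) : ∃ k, v < X k ω := by
  obtain ⟨k, hk⟩ := exists_eq_ordDesc X ω 0
  exact ⟨k, hk ▸ maxRV_eq_ordDesc_zero X ω ▸ h⟩

theorem exists_ne_lt_of_lt_ordDesc {i : Fin n} (hi : i ≠ 0) (hv : v < ordDesc X i ω) :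
    ∃ j k, j ≠ k ∧ v < X j ω ∧ v < X k ω := by
  classical
  have hcard : #(univ.filter fun k => v < X k ω)
      = (sortedValues X ω).countP fun z => decide (v < z) := by
    rw [(sortedValues_perm X ω).countP_eq, ← Multiset.coe_countP, ← Fin.univ_val_map,
      Multiset.countP_map]
    rfl
  have hcount : 1 < (sortedValues X ω).countP fun z => decide (v < z) := by
    obtain ⟨k, hk⟩ := exists_eq_ordDesc X ω i
    have h0 : v < ordDesc X 0 ω := hv.trans_le (hk ▸ le_ordDesc_zero X ω k)
    rw [ordDesc_eq_getElem] at hv h0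
    obtain ⟨m, hm⟩ := Nat.exists_eq_add_one_of_ne_zero (Fin.val_ne_iff.mpr hi)
    rcases hl : sortedValues X ω with _ | ⟨x, t⟩
    · exact absurd (length_sortedValues X ω) (by simp [hl, (NeZero.ne n).symm])
    · simp only [hl, hm, List.getElem_cons_succ, Fin.val_zero, List.getElem_cons_zero] at hv h0
      rw [List.countP_cons, decide_eq_true h0, if_pos rfl, Nat.lt_add_left_iff_pos]
      exact List.countP_pos_iff.mpr ⟨_, List.getElem_mem _, decide_eq_true hv⟩
  obtain ⟨j, hj, k, hk, hjk⟩ := one_lt_card.mp (hcard ▸ hcount)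
  exact ⟨j, k, hjk, (mem_filter.mp hj).2, (mem_filter.mp hk).2⟩

theorem weighted_sum_ordDesc_le (hc : ∀ i, i ≠ 0 → c i ∈ Set.Icc 0 d) (hv : 0 ≤ v)
    (hX : ∀ j k, j ≠ k → ¬(v < X j ω ∧ v < X k ω)) :
    ∑ i, c i * ordDesc X i ω ≤ c 0 * maxRV X ω + (n - 1 : ℕ) * d * v := by
  rw [maxRV_eq_ordDesc_zero]
  refine sum_mul_le_of_le hc hv fun i hi => not_lt.mp fun hlt => ?_
  obtain ⟨j, k, hjk, hj, hk⟩ := exists_ne_lt_of_lt_ordDesc X ω hi hlt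
  exact hX j k hjk ⟨hj, hk⟩

theorem le_weighted_sum_ordDesc (hc : ∀ i, i ≠ 0 → c i ∈ Set.Icc 0 d) (hv : 0 ≤ v)
    (hX : ∀ k, -v ≤ X k ω) :
    c 0 * maxRV X ω - (n - 1 : ℕ) * d * v ≤ ∑ i, c i * ordDesc X i ω := by
  rw [maxRV_eq_ordDesc_zero]
  exact sub_le_sum_mul_of_le hc hv fun i _ => le_ordDesc_of_forall_le X ω hX i

theorem setOf_lt_maxRV (v : ℝ) : {ω | v < maxRV X ω} = ⋃ k ∈ univ, {ω | v < X k ω} := by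
  ext ω
  simp only [Set.mem_ofPred_eq, mem_univ, Set.iUnion_true, Set.mem_iUnion]
  exact ⟨exists_lt_of_lt_maxRV X ω, fun ⟨k, hk⟩ => hk.trans_le (le_maxRV X ω k)⟩

end OrderStatistics

namespace MeasureTheory

variable {Ω ι : Type*} [MeasurableSpace Ω] {μ : Measure Ω} [IsFiniteMeasure μ]

theorem sum_measureReal_le_measureReal_biUnion_add_offDiag [DecidableEq ι] (s : Finset ι)
    {A : ι → Set Ω} (hA : ∀ i ∈ s, MeasurableSet (A i)) :
    ∑ i ∈ s, μ.real (A i)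
      ≤ μ.real (⋃ i ∈ s, A i) + ∑ p ∈ s.offDiag, μ.real (A p.1 ∩ A p.2) := by
  induction s using Finset.induction_on with
  | empty => simp
  | insert k s hk ih =>
    have hAs : ∀ i ∈ s, MeasurableSet (A i) := fun i hi => hA i (mem_insert_of_mem hi)
    have hunion : μ.real (A k) + μ.real (⋃ i ∈ s, A i)
        = μ.real (A k ∪ ⋃ i ∈ s, A i) + μ.real (A k ∩ ⋃ i ∈ s, A i) :=
      (measureReal_union_add_inter (s.measurableSet_biUnion hAs) (measure_ne_top _ _)
        (measure_ne_top _ _)).symm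
    have hinter : μ.real (A k ∩ ⋃ i ∈ s, A i) ≤ ∑ j ∈ s, μ.real (A k ∩ A j) := by
      rw [Set.inter_iUnion₂]
      exact measureReal_biUnion_finset_le _ _
    have hpairs : ∑ j ∈ s, μ.real (A k ∩ A j) + ∑ p ∈ s.offDiag, μ.real (A p.1 ∩ A p.2)
        ≤ ∑ p ∈ (insert k s).offDiag, μ.real (A p.1 ∩ A p.2) := by
      have hdisj : Disjoint ({k} ×ˢ s) s.offDiag := disjoint_left.mpr fun p hp hp' =>
        hk ((mem_singleton.mp (mem_product.mp hp).1) ▸ (mem_offDiag.mp hp').1)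
      rw [offDiag_insert hk, ← sum_singleton (fun a => ∑ j ∈ s, μ.real (A a ∩ A j)) k,
        ← sum_product (f := fun p => μ.real (A p.1 ∩ A p.2)), ← sum_union hdisj,
        union_comm ({k} ×ˢ s)]
      exact sum_le_sum_of_subset_of_nonneg subset_union_left fun _ _ _ => measureReal_nonneg
    rw [sum_insert hk, set_biUnion_insert]
    linarith [ih hAs]

end MeasureTheory

theorem eventually_lt_self_of_isLittleO {f : ℝ → ℝ} (hf : f =o[atTop] fun x => x) :
    ∀ᶠ x in atTop, f x < x := by
  filter_upwards [hf.def one_half_pos, eventually_gt_atTop 0] with x hfx hx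
  rw [Real.norm_eq_abs, Real.norm_eq_abs, abs_of_pos hx] at hfx
  linarith [le_abs_self (f x)]

theorem tendstoUniformlyOn_of_squeeze_scaled {α : Type*} {F : ℝ → α → ℝ} {K : Set α}
    {s : α → ℝ} {b : ℝ} (hs : ∀ c ∈ K, 0 < s c ∧ s c ≤ b) {ℓ u : ℝ → ℝ} {l : ℝ}
    (hℓ : Tendsto ℓ atTop (𝓝 l)) (hu : Tendsto u atTop (𝓝 l))
    (hF : ∀ᶠ y in atTop, ∀ c ∈ K, ℓ y ≤ F (s c * y) c ∧ F (s c * y) c ≤ u y) :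
    TendstoUniformlyOn F (fun _ => l) atTop K := by
  rw [Metric.tendstoUniformlyOn_iff]
  intro ε hε
  obtain ⟨M, hM⟩ := eventually_atTop.mp <| hF.and <|
    (hℓ.eventually (lt_mem_nhds (sub_lt_self l hε))).and
      (hu.eventually (gt_mem_nhds (lt_add_of_pos_right l hε)))
  filter_upwards [eventually_ge_atTop (b * max M 0)] with x hx c hc
  obtain ⟨hsc, hsb⟩ := hs c hc
  have hy : M ≤ x / s c := (le_max_left M 0).trans <| (le_div_iff₀ hsc).mpr <|
    (mul_comm (s c) _ ▸ mul_le_mul_of_nonneg_right hsb (le_max_right M 0)).trans hx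
  obtain ⟨hFc, hℓy, huy⟩ := hM _ hy
  obtain ⟨hlo, hhi⟩ := hFc c hc
  rw [mul_div_cancel₀ x hsc.ne'] at hlo hhi
  rw [Real.dist_eq, abs_sub_lt_iff]
  constructor <;> linarith

open OrderStatistics

section DependenceConditions

variable {Ω : Type*} [MeasurableSpace Ω] {μ : Measure Ω} {n : ℕ} {X : Fin n → Ω → ℝ} {h : ℝ → ℝ}

theorem DS1.tendsto_sum_offDiag_div (hDS1 : DS1 μ X h) {t : ℝ} (ht : 0 < t) :
    Tendsto (fun x => (∑ p ∈ univ.offDiag, μ.real {ω | t * h x < |X p.1 ω| ∧ x < X p.2 ω})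
      / tailP μ (maxRV X) x) atTop (𝓝 0) := by
  simp_rw [sum_div]
  exact (sum_const_zero : ∑ _p ∈ (univ : Finset (Fin n)).offDiag, (0 : ℝ) = 0) ▸
    tendsto_finsetSum _ fun p hp => hDS1 t ht p.1 p.2 (mem_offDiag.mp hp).2.2

theorem DS2.tendsto_sum_offDiag_div {L : ℝ} (hDS2 : DS2 μ X h L) :
    Tendsto (fun x => (∑ p ∈ univ.offDiag, μ.real {ω | L * h x < X p.1 ω ∧ L * h x < X p.2 ω})
      / tailP μ (maxRV X) x) atTop (𝓝 0) := by
  have hpair : ∀ p ∈ univ.offDiag, Tendsto (fun x =>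
      μ.real {ω | L * h x < X p.1 ω ∧ L * h x < X p.2 ω} / tailP μ (maxRV X) x) atTop (𝓝 0) := by
    intro p hp
    rcases lt_or_gt_of_ne (mem_offDiag.mp hp).2.2 with hlt | hgt
    · exact hDS2 _ _ hlt
    · simp_rw [and_comm (a := L * h _ < X p.1 _)]
      exact hDS2 _ _ hgt
  simp_rw [sum_div]
  exact (sum_const_zero : ∑ _p ∈ (univ : Finset (Fin n)).offDiag, (0 : ℝ) = 0) ▸
    tendsto_finsetSum _ hpair

end DependenceConditions

section TailEstimates

variable {Ω : Type*} [MeasurableSpace Ω] (μ : Measure Ω) {n : ℕ} (X : Fin n → Ω → ℝ)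

theorem tailP_eq_measureReal (Y : Ω → ℝ) (x : ℝ) : tailP μ Y x = μ.real {ω | x < Y ω} := rfl

theorem tailP_const_mul {Y : Ω → ℝ} {c : ℝ} (hc : 0 < c) (y : ℝ) :
    tailP μ (fun ω => c * Y ω) (c * y) = tailP μ Y y := by
  simp only [tailP_eq_measureReal, mul_lt_mul_iff_right₀ hc]

theorem tailP_maxRV_le_sum_tailP [NeZero n] (y : ℝ) :
    tailP μ (maxRV X) y ≤ ∑ k, tailP μ (X k) y := by
  rw [tailP_eq_measureReal, setOf_lt_maxRV]
  exact measureReal_biUnion_finset_le _ _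

variable [IsFiniteMeasure μ] [NeZero n] {c : Fin n → ℝ} {d v s : ℝ}

theorem tailP_weighted_sum_le (hc0 : 0 < c 0) (hc : ∀ i, i ≠ 0 → c i ∈ Set.Icc 0 d)
    (hv : 0 ≤ v) (hs : (n - 1 : ℕ) * d * v ≤ c 0 * s) (y : ℝ) :
    tailP μ (fun ω => ∑ i, c i * ordDesc X i ω) (c 0 * y)
      ≤ tailP μ (maxRV X) (y - s) + ∑ p ∈ univ.offDiag, μ.real {ω | v < X p.1 ω ∧ v < X p.2 ω} := by
  refine (measureReal_mono (fun ω hω => ?_) (measure_ne_top _ _)).trans <|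
    (measureReal_union_le _ _).trans (add_le_add le_rfl (measureReal_biUnion_finset_le _ _))
  by_cases hpair : ∃ p ∈ univ.offDiag, v < X p.1 ω ∧ v < X p.2 ω
  · right
    simpa only [Set.mem_iUnion, exists_prop, Set.mem_ofPred_eq] using hpair
  · left
    have hsum := weighted_sum_ordDesc_le X ω hc hv fun j k hjk hjk' =>
      hpair ⟨(j, k), mem_offDiag.mpr ⟨mem_univ j, mem_univ k, hjk⟩, hjk'⟩
    have : c 0 * (y - s) < c 0 * maxRV X ω := by
      simp only [Set.mem_ofPred_eq] at hω
      rw [mul_sub]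
      linarith
    exact lt_of_mul_lt_mul_left this hc0.le

theorem tailP_sub_le_tailP_weighted_sum (hc0 : 0 < c 0) (hc : ∀ i, i ≠ 0 → c i ∈ Set.Icc 0 d)
    (hv : 0 ≤ v) (hs : (n - 1 : ℕ) * d * v ≤ c 0 * s) (hs0 : 0 ≤ s) {y : ℝ} (hy : 0 ≤ y) :
    tailP μ (maxRV X) (y + s) - ∑ p ∈ univ.offDiag, μ.real {ω | v < |X p.1 ω| ∧ y < X p.2 ω}
      ≤ tailP μ (fun ω => ∑ i, c i * ordDesc X i ω) (c 0 * y) := by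
  refine (sub_le_sub_left (measureReal_biUnion_finset_le _ _) _).trans <|
    (le_measureReal_sdiff (measure_ne_top _ _)).trans (measureReal_mono fun ω ⟨hmax, hω⟩ => ?_)
  simp only [Set.mem_ofPred_eq, Set.mem_iUnion, exists_prop, not_exists, not_and] at hmax hω ⊢
  obtain ⟨j, hj⟩ := exists_lt_of_lt_maxRV X ω hmax
  have hbound : ∀ k, -v ≤ X k ω := fun k => by
    by_cases hkj : k = j
    · subst hkj; linarith
    · by_contra hk
      exact hω (k, j) (mem_offDiag.mpr ⟨mem_univ k, mem_univ j, hkj⟩)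
        (by rw [lt_abs]; right; linarith) (by linarith)
  have hsum := le_weighted_sum_ordDesc X ω hc hv hbound
  have := mul_lt_mul_of_pos_left hmax hc0
  rw [mul_add] at this
  linarith

theorem sum_tailP_le_tailP_maxRV_add (hX : ∀ k, Measurable (X k)) {y : ℝ} (hvy : v ≤ y) :
    ∑ k, tailP μ (X k) y
      ≤ tailP μ (maxRV X) y + ∑ p ∈ univ.offDiag, μ.real {ω | v < X p.1 ω ∧ v < X p.2 ω} := by
  refine (sum_measureReal_le_measureReal_biUnion_add_offDiag univ
    fun k _ => measurableSet_lt measurable_const (hX k)).trans ?_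
  rw [tailP_eq_measureReal, setOf_lt_maxRV]
  refine add_le_add le_rfl (sum_le_sum fun p _ => measureReal_mono ?_ (measure_ne_top μ _))
  exact fun ω ⟨h1, h2⟩ => ⟨hvy.trans_lt h1, hvy.trans_lt h2⟩

end TailEstimates

section MaxSum

variable {Ω : Type*} [MeasurableSpace Ω] (μ : Measure Ω) [IsFiniteMeasure μ] {n : ℕ} [NeZero n]
  {X : Fin n → Ω → ℝ} {h : ℝ → ℝ} {L a b d : ℝ} {K : Set (Fin n → ℝ)}

theorem tendstoUniformlyOn_tailP_weighted_sum_div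
    (hT : ∀ x, 0 ≤ x → 0 < tailP μ (maxRV X) x) (hh : ∀ᶠ x in atTop, 0 < h x)
    (hshift : ∀ y, Tendsto (fun x => tailP μ (maxRV X) (x + y * h x) / tailP μ (maxRV X) x)
      atTop (𝓝 1))
    (hDS1 : DS1 μ X h) (hL : 0 < L) (hDS2 : DS2 μ X h L) (ha : 0 < a) (hd : 0 ≤ d)
    (hK : ∀ c ∈ K, c 0 ∈ Set.Icc a b ∧ ∀ i, i ≠ 0 → c i ∈ Set.Icc 0 d) :
    TendstoUniformlyOn (fun x c => tailP μ (fun ω => ∑ i, c i * ordDesc X i ω) x /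
      tailP μ (fun ω => c 0 * maxRV X ω) x) 1 atTop K := by
  set T := tailP μ (maxRV X)
  set S₁ := fun y => ∑ p ∈ univ.offDiag, μ.real {ω | L * h y < |X p.1 ω| ∧ y < X p.2 ω}
  set S₂ := fun y => ∑ p ∈ univ.offDiag, μ.real {ω | L * h y < X p.1 ω ∧ L * h y < X p.2 ω}
  -- `κ h(y)` absorbs the `n - 1` lower order statistics, each at most `L h(y)` with weight `≤ d`
  set κ := (n - 1 : ℕ) * d * L / a
  have haκ : a * κ = (n - 1 : ℕ) * d * L := mul_div_cancel₀ _ ha.ne'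
  have hκ : ∀ c ∈ K, ∀ y, 0 ≤ h y → (n - 1 : ℕ) * d * (L * h y) ≤ c 0 * (κ * h y) :=
    fun c hc y hy => calc
      (n - 1 : ℕ) * d * (L * h y) = a * κ * h y := by rw [haκ]; ring
      _ ≤ c 0 * κ * h y := by gcongr; exact (hK c hc).1.1
      _ = c 0 * (κ * h y) := by ring
  refine tendstoUniformlyOn_of_squeeze_scaled
    (fun c hc => ⟨ha.trans_le (hK c hc).1.1, (hK c hc).1.2⟩) (l := 1)
    (ℓ := fun y => (T (y + κ * h y) - S₁ y) / T y) (u := fun y => (T (y + (-κ) * h y) + S₂ y) / T y)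
    ?_ ?_ ?_
  · simp_rw [sub_div]
    simpa using (hshift κ).sub (hDS1.tendsto_sum_offDiag_div hL)
  · simp_rw [add_div]
    simpa using (hshift (-κ)).add hDS2.tendsto_sum_offDiag_div
  filter_upwards [eventually_ge_atTop 0, hh] with y hy hhy c hc
  have hc0 := ha.trans_le (hK c hc).1.1
  rw [tailP_const_mul μ hc0, neg_mul, ← sub_eq_add_neg]
  exact ⟨div_le_div_of_nonneg_right (tailP_sub_le_tailP_weighted_sum μ X hc0 (hK c hc).2
      (by positivity) (hκ c hc y hhy.le) (by positivity) hy) (hT y hy).le,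
    div_le_div_of_nonneg_right (tailP_weighted_sum_le μ X hc0 (hK c hc).2
      (by positivity) (hκ c hc y hhy.le) y) (hT y hy).le⟩

theorem tendstoUniformlyOn_tailP_maxRV_div_sum (hX : ∀ i, Measurable (X i))
    (hT : ∀ x, 0 ≤ x → 0 < tailP μ (maxRV X) x) (hh : h =o[atTop] fun x => x)
    (hDS2 : DS2 μ X h L) (ha : 0 < a) (hK : ∀ c ∈ K, c 0 ∈ Set.Icc a b) :
    TendstoUniformlyOn (fun x c => tailP μ (fun ω => c 0 * maxRV X ω) x /
      ∑ i, tailP μ (fun ω => c 0 * X i ω) x) 1 atTop K := by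
  set T := tailP μ (maxRV X)
  set S₂ := fun y => ∑ p ∈ univ.offDiag, μ.real {ω | L * h y < X p.1 ω ∧ L * h y < X p.2 ω}
  refine tendstoUniformlyOn_of_squeeze_scaled
    (fun c hc => ⟨ha.trans_le (hK c hc).1, (hK c hc).2⟩) (l := 1)
    (ℓ := fun y => T y / (T y + S₂ y)) (u := fun _ => 1) ?_ tendsto_const_nhds ?_
  · have : Tendsto (fun y => (1 + S₂ y / T y)⁻¹) atTop (𝓝 1) := by
      simpa using (tendsto_const_nhds.add hDS2.tendsto_sum_offDiag_div).inv₀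
        (by norm_num : (1 : ℝ) + 0 ≠ 0)
    refine this.congr' ?_
    filter_upwards [eventually_ge_atTop 0] with y hy
    have := hT y hy
    field_simp
  filter_upwards [eventually_ge_atTop 0, eventually_lt_self_of_isLittleO (hh.const_mul_left L)]
    with y hy hLy c hc
  have hc0 := ha.trans_le (hK c hc).1
  simp only [tailP_const_mul μ hc0]
  have hmax_le := tailP_maxRV_le_sum_tailP μ X y
  exact ⟨div_le_div_of_nonneg_left (hT y hy).le ((hT y hy).trans_le hmax_le)
      (sum_tailP_le_tailP_maxRV_add μ X hX hLy.le),
    div_le_one_of_le₀ hmax_le ((hT y hy).le.trans hmax_le)⟩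

end MaxSum

theorem weighted_order_stats_tail_assumptionB_general
    {Ω : Type*} [MeasurableSpace Ω] (μ : Measure Ω) [IsProbabilityMeasure μ]
    {n : ℕ} [NeZero n] (X : Fin n → Ω → ℝ) (hXm : ∀ i, Measurable (X i))
    (hB : AssumptionB μ X)
    (a b d : ℝ) (ha : 0 < a) (hd : 0 ≤ d) :
    UnifMaxSum μ X
      {c : Fin n → ℝ | c 0 ∈ Set.Icc a b ∧ ∀ i : Fin n, i ≠ 0 → c i ∈ Set.Icc 0 d} := by
  obtain ⟨⟨hT, -⟩, h, ⟨hh_pos, hh_o, hh_shift, -⟩, hDS1, L, hL, hDS2⟩ := hB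
  exact ⟨tendstoUniformlyOn_tailP_weighted_sum_div μ hT hh_pos hh_shift hDS1 hL hDS2 ha hd
      fun _ hc => hc,
    tendstoUniformlyOn_tailP_maxRV_div_sum μ hXm hT hh_o hDS2 ha fun _ hc => hc.1⟩

/-- Theorem 3.1 under Assumption B. -/
theorem weighted_order_stats_tail_assumptionB
    {Ω : Type*} [MeasurableSpace Ω] (μ : Measure Ω) [IsProbabilityMeasure μ]
    {n : ℕ} [NeZero n] (X : Fin n → Ω → ℝ) (hXm : ∀ i, Measurable (X i))
    (hB : AssumptionB μ X)
    (a b d : ℝ) (ha : 0 < a) (hab : a ≤ b) (hd : 0 ≤ d) :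
    UnifMaxSum μ X
      {c : Fin n → ℝ | c 0 ∈ Set.Icc a b ∧ ∀ i : Fin n, i ≠ 0 → c i ∈ Set.Icc 0 d} :=
  weighted_order_stats_tail_assumptionB_general μ X hXm hB a b d ha hd
end

section
/- Let X_1,...,X_n be n real-valued, mutually independent random variables whose maximum X_{n:n} = max(X_1,...,X_n) is long-tailed (X_{n:n} ∈ 𝓛). Suppose there exists a function h ∈ 𝓗*_{X_{n:n}} (so in particular h(x) → ∞) such that condition (IDS2) holds: lim_{x→∞} P(X_i > L h(x)) · P(X_j > L h(x)) / P(X_{n:n} > x) = 0 for all 1 ≤ i ≠ j ≤ n and some L > 0. Then X_1,...,X_n are max-sum equivalent: P(∑_{i=1}^{n} X_i > x) ~ ∑_{i=1}^{n} P(X_i > x) as x → ∞. -/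
open MeasureTheory Filter Topology Asymptotics

open MeasureTheory ProbabilityTheory Filter Topology Finset

/-!
Write `T` for the tail of `X_{n:n}`, `S` for the sum of the tails of the `X_i` and `G` for the
tail of `∑ X_i`, and put `c = L h(x)`. If `∑ X_i > x`, then either two summands exceed `c`, or all
but the largest one are at most `c` and `X_{n:n} > x - n c`; conversely `∑ X_i > x` as soon as one
summand exceeds `x + n c` and all others exceed `-c`. By independence the probability that two
summands exceed `c` is at most `N(c) = ∑_{i ≠ j} P(X_i > c) P(X_j > c)`, which is `o(T(x))` by
(IDS2), while `P(X_i ≤ -c) → 0` because `h → ∞`. Hence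
`T(x + n c) (1 - o(1)) - o(T(x)) ≤ G(x) ≤ T(x - n c) + o(T(x))`, and both bounds are `~ T(x)`
since `h ∈ 𝓗_{X_{n:n}}`. By inclusion–exclusion also `T ≤ S ≤ T + N`, so `G ~ T ~ S`.
-/

theorem sum_measureReal_le_measureReal_biUnion_add_sum_inter {Ω ι : Type*} [MeasurableSpace Ω]
    {μ : Measure Ω} [IsFiniteMeasure μ] [DecidableEq ι] {A : ι → Set Ω}
    (hA : ∀ i, MeasurableSet (A i)) (s : Finset ι) :
    ∑ i ∈ s, μ.real (A i) ≤
      μ.real (⋃ i ∈ s, A i) + ∑ i ∈ s, ∑ j ∈ s.erase i, μ.real (A i ∩ A j) := by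
  induction s using Finset.induction_on with
  | empty => simp
  | insert a s ha ih =>
    have hunion := measureReal_union_add_inter (μ := μ) (s := A a)
      (s.measurableSet_biUnion fun i _ => hA i)
      (measure_ne_top _ _) (measure_ne_top _ _)
    have hinter : μ.real (A a ∩ ⋃ i ∈ s, A i) ≤ ∑ j ∈ s, μ.real (A a ∩ A j) := by
      rw [Set.inter_iUnion₂]
      exact measureReal_biUnion_finset_le s _
    have hpairs : ∑ i ∈ s, ∑ j ∈ s.erase i, μ.real (A i ∩ A j) ≤
        ∑ i ∈ s, ∑ j ∈ (insert a s).erase i, μ.real (A i ∩ A j) :=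
      sum_le_sum fun i _ => sum_le_sum_of_subset_of_nonneg
        (erase_subset_erase i (subset_insert a s)) fun _ _ _ => measureReal_nonneg
    rw [sum_insert ha, sum_insert ha, erase_insert ha, set_biUnion_insert]
    linarith

theorem ProbabilityTheory.IndepFun.measureReal_inter_preimage_eq_mul {Ω β γ : Type*}
    [MeasurableSpace Ω] {μ : Measure Ω} [MeasurableSpace β] [MeasurableSpace γ]
    {f : Ω → β} {g : Ω → γ} (hfg : IndepFun f g μ) {s : Set β} {t : Set γ}
    (hs : MeasurableSet s) (ht : MeasurableSet t) :
    μ.real (f ⁻¹' s ∩ g ⁻¹' t) = μ.real (f ⁻¹' s) * μ.real (g ⁻¹' t) := by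
  simp only [Measure.real, hfg.measure_inter_preimage_eq_mul s t hs ht, ENNReal.toReal_mul]

theorem exists_pair_lt_or_sub_lt_iSup_of_lt_sum {ι : Type*} [Fintype ι] [Nonempty ι]
    {a : ι → ℝ} {c x : ℝ} (hc : 0 ≤ c) (hx : x < ∑ i, a i) :
    (∃ i j, i ≠ j ∧ c < a i ∧ c < a j) ∨ x - Fintype.card ι * c < ⨆ i, a i := by
  classical
  obtain ⟨k, hk⟩ := Finite.exists_max a
  by_cases hpair : ∃ j, j ≠ k ∧ c < a j
  · obtain ⟨j, hjk, hj⟩ := hpair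
    exact Or.inl ⟨k, j, hjk.symm, hj.trans_le (hk j), hj⟩
  push Not at hpair
  have hrest : ∑ j ∈ univ.erase k, a j ≤ Fintype.card ι * c :=
    calc ∑ j ∈ univ.erase k, a j ≤ ∑ _j ∈ univ.erase k, c :=
          sum_le_sum fun j hj => hpair j (ne_of_mem_erase hj)
      _ ≤ ∑ _j : ι, c := sum_le_sum_of_subset_of_nonneg (erase_subset _ _) fun _ _ _ => hc
      _ = Fintype.card ι * c := by simp
  right
  calc x - Fintype.card ι * c < a k := by linarith [add_sum_erase univ a (mem_univ k)]
    _ ≤ ⨆ i, a i := le_ciSup (Set.finite_range a).bddAbove k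

theorem lt_sum_of_add_card_mul_lt {ι : Type*} [Fintype ι] [DecidableEq ι] {a : ι → ℝ}
    {c x : ℝ} (hc : 0 ≤ c) {j : ι} (hj : x + Fintype.card ι * c < a j)
    (hrest : ∀ i ≠ j, -c < a i) : x < ∑ i, a i := by
  have hothers : -(Fintype.card ι * c) ≤ ∑ i ∈ univ.erase j, a i :=
    calc -(Fintype.card ι * c) = ∑ _i : ι, -c := by simp
      _ ≤ ∑ _i ∈ univ.erase j, -c :=
          sum_le_sum_of_subset_of_nonpos' (erase_subset j univ) fun _ _ _ => neg_nonpos.2 hc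
      _ ≤ ∑ i ∈ univ.erase j, a i := sum_le_sum fun i hi => (hrest i (ne_of_mem_erase hi)).le
  linarith [add_sum_erase univ a (mem_univ j)]

def pairTailSum {Ω : Type*} [MeasurableSpace Ω] (μ : Measure Ω) {n : ℕ} (X : Fin n → Ω → ℝ)
    (c : ℝ) : ℝ :=
  ∑ i, ∑ j ∈ univ.erase i, tailP μ (X i) c * tailP μ (X j) c

def leftTailSum {Ω : Type*} [MeasurableSpace Ω] (μ : Measure Ω) {n : ℕ} (X : Fin n → Ω → ℝ)
    (c : ℝ) : ℝ :=
  ∑ i, μ.real {ω | X i ω ≤ -c}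

theorem setOf_lt_maxRV {Ω : Type*} {n : ℕ} [NeZero n] (X : Fin n → Ω → ℝ) (x : ℝ) :
    {ω | x < maxRV X ω} = ⋃ i, {ω | x < X i ω} := by
  ext ω
  simp only [Set.mem_ofPred_eq, Set.mem_iUnion, maxRV]
  exact lt_ciSup_iff (Set.finite_range _).bddAbove

section Tails

variable {Ω : Type*} [MeasurableSpace Ω] {μ : Measure Ω}

theorem tailP_nonneg {Y : Ω → ℝ} {x : ℝ} : 0 ≤ tailP μ Y x :=
  measureReal_nonneg

theorem tendsto_measureReal_le_atBot [IsFiniteMeasure μ] {Y : Ω → ℝ} (hY : Measurable Y) :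
    Tendsto (fun t => μ.real {ω | Y ω ≤ t}) atBot (𝓝 0) := by
  have hlim := tendsto_measure_iInter_atBot (μ := μ) (s := fun t : ℝ => {ω | Y ω ≤ t})
    (fun _ => (measurableSet_le hY measurable_const).nullMeasurableSet)
    (fun _ _ hab _ hω => le_trans hω hab) ⟨0, measure_ne_top _ _⟩
  have hempty : ⋂ t : ℝ, {ω | Y ω ≤ t} = ∅ :=
    Set.eq_empty_of_forall_notMem fun ω hω => by
      have : Y ω ≤ Y ω - 1 := Set.mem_iInter.1 hω (Y ω - 1)
      linarith
  rw [hempty, measure_empty] at hlim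
  exact (ENNReal.tendsto_toReal ENNReal.zero_ne_top).comp hlim

variable {n : ℕ} {X : Fin n → Ω → ℝ}

theorem tailP_maxRV_le_sum [NeZero n] (x : ℝ) :
    tailP μ (maxRV X) x ≤ ∑ i, tailP μ (X i) x := by
  rw [tailP, setOf_lt_maxRV]
  exact measureReal_iUnion_fintype_le _

theorem tendsto_leftTailSum_atTop [IsFiniteMeasure μ] (hXm : ∀ i, Measurable (X i)) :
    Tendsto (leftTailSum μ X) atTop (𝓝 0) := by
  unfold leftTailSum
  simpa using tendsto_finsetSum univ fun i _ =>
    (tendsto_measureReal_le_atBot (hXm i)).comp tendsto_neg_atTop_atBot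

variable [IsFiniteMeasure μ] (hindep : Pairwise fun i j => IndepFun (X i) (X j) μ)
include hindep

theorem sum_measureReal_inter_le_pairTailSum {c : ℝ} {B : Fin n → Set Ω}
    (hB : ∀ i, B i ⊆ {ω | c < X i ω}) :
    ∑ i, ∑ j ∈ univ.erase i, μ.real (B i ∩ B j) ≤ pairTailSum μ X c := by
  refine sum_le_sum fun i _ => sum_le_sum fun j hj => ?_
  calc μ.real (B i ∩ B j) ≤ μ.real (X i ⁻¹' Set.Ioi c ∩ X j ⁻¹' Set.Ioi c) :=
        measureReal_mono (Set.inter_subset_inter (hB i) (hB j))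
    _ = tailP μ (X i) c * tailP μ (X j) c :=
        (hindep (ne_of_mem_erase hj).symm).measureReal_inter_preimage_eq_mul
          measurableSet_Ioi measurableSet_Ioi

theorem tailP_sum_le_tailP_maxRV_add_pairTailSum [NeZero n] {c : ℝ} (hc : 0 ≤ c) (x : ℝ) :
    tailP μ (fun ω => ∑ i, X i ω) x ≤ tailP μ (maxRV X) (x - n * c) + pairTailSum μ X c := by
  set A : Fin n → Set Ω := fun i => {ω | c < X i ω}
  have hsub : {ω | x < ∑ i, X i ω} ⊆
      {ω | x - n * c < maxRV X ω} ∪ ⋃ i, ⋃ j ∈ univ.erase i, A i ∩ A j := by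
    intro ω hω
    rcases exists_pair_lt_or_sub_lt_iSup_of_lt_sum (a := fun i => X i ω) hc hω with
      ⟨i, j, hij, hi, hj⟩ | hmax
    · exact Or.inr (Set.mem_iUnion.2 ⟨i, Set.mem_iUnion₂.2
        ⟨j, mem_erase.2 ⟨hij.symm, mem_univ j⟩, hi, hj⟩⟩)
    · exact Or.inl (by simpa [maxRV] using hmax)
  calc tailP μ (fun ω => ∑ i, X i ω) x
      ≤ μ.real ({ω | x - n * c < maxRV X ω} ∪ ⋃ i, ⋃ j ∈ univ.erase i, A i ∩ A j) :=
        measureReal_mono hsub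
    _ ≤ tailP μ (maxRV X) (x - n * c) + ∑ i, ∑ j ∈ univ.erase i, μ.real (A i ∩ A j) :=
        (measureReal_union_le _ _).trans (add_le_add le_rfl ((measureReal_iUnion_fintype_le _).trans
          (sum_le_sum fun _ _ => measureReal_biUnion_finset_le _ _)))
    _ ≤ tailP μ (maxRV X) (x - n * c) + pairTailSum μ X c :=
        add_le_add le_rfl (sum_measureReal_inter_le_pairTailSum hindep fun _ => subset_rfl)

theorem sum_tailP_le_tailP_maxRV_add_pairTailSum [NeZero n] (hXm : ∀ i, Measurable (X i))
    {c x : ℝ} (hcx : c ≤ x) :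
    ∑ i, tailP μ (X i) x ≤ tailP μ (maxRV X) x + pairTailSum μ X c := by
  have hbonf := sum_measureReal_le_measureReal_biUnion_add_sum_inter (μ := μ)
    (A := fun i => {ω | x < X i ω}) (fun i => measurableSet_lt measurable_const (hXm i)) univ
  have hpairs := sum_measureReal_inter_le_pairTailSum hindep (B := fun i => {ω | x < X i ω})
    fun _ _ hω => hcx.trans_lt hω
  simp only [mem_univ, Set.iUnion_true] at hbonf
  rw [tailP, setOf_lt_maxRV]
  exact hbonf.trans (add_le_add le_rfl hpairs)

theorem tailP_mul_one_sub_leftTailSum_le (j : Fin n) (c y : ℝ) :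
    tailP μ (X j) y * (1 - leftTailSum μ X c) ≤
      μ.real ({ω | y < X j ω} ∩ ⋂ i ∈ univ.erase j, {ω | -c < X i ω}) := by
  set E := {ω | y < X j ω} ∩ ⋂ i ∈ univ.erase j, {ω | -c < X i ω}
  have hsub : {ω | y < X j ω} ⊆
      E ∪ ⋃ i ∈ univ.erase j, X j ⁻¹' Set.Ioi y ∩ X i ⁻¹' Set.Iic (-c) := by
    intro ω hω
    by_cases hE : ω ∈ E
    · exact Or.inl hE
    · simp only [E, Set.mem_inter_iff, Set.mem_iInter₂, not_and, not_forall] at hE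
      obtain ⟨i, hi, hic⟩ := hE hω
      exact Or.inr (Set.mem_biUnion hi ⟨hω, (not_lt.1 hic : X i ω ≤ -c)⟩)
  have hbad : ∑ i ∈ univ.erase j, μ.real (X j ⁻¹' Set.Ioi y ∩ X i ⁻¹' Set.Iic (-c)) ≤
      tailP μ (X j) y * leftTailSum μ X c := by
    rw [leftTailSum, mul_sum]
    calc ∑ i ∈ univ.erase j, μ.real (X j ⁻¹' Set.Ioi y ∩ X i ⁻¹' Set.Iic (-c))
        = ∑ i ∈ univ.erase j, tailP μ (X j) y * μ.real {ω | X i ω ≤ -c} :=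
          sum_congr rfl fun i hi =>
            (hindep (ne_of_mem_erase hi).symm).measureReal_inter_preimage_eq_mul
              measurableSet_Ioi measurableSet_Iic
      _ ≤ ∑ i, tailP μ (X j) y * μ.real {ω | X i ω ≤ -c} :=
          sum_le_sum_of_subset_of_nonneg (subset_univ _) fun _ _ _ =>
            mul_nonneg tailP_nonneg measureReal_nonneg
  have htotal : tailP μ (X j) y ≤ μ.real E + tailP μ (X j) y * leftTailSum μ X c :=
    (measureReal_mono hsub).trans ((measureReal_union_le _ _).trans
      (add_le_add le_rfl ((measureReal_biUnion_finset_le _ _).trans hbad)))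
  linarith

theorem sum_tailP_mul_one_sub_leftTailSum_le (hXm : ∀ i, Measurable (X i)) {c x : ℝ}
    (hc : 0 ≤ c) (hcx : c ≤ x) :
    (∑ i, tailP μ (X i) (x + n * c)) * (1 - leftTailSum μ X c) ≤
      tailP μ (fun ω => ∑ i, X i ω) x + pairTailSum μ X c := by
  set E : Fin n → Set Ω := fun j =>
    {ω | x + n * c < X j ω} ∩ ⋂ i ∈ univ.erase j, {ω | -c < X i ω}
  have hEm : ∀ j, MeasurableSet (E j) := fun j =>
    (measurableSet_lt measurable_const (hXm j)).inter <|
      MeasurableSet.biInter (univ.erase j).countable_toSet fun i _ =>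
        measurableSet_lt measurable_const (hXm i)
  have hEsum : (⋃ j ∈ univ, E j) ⊆ {ω | x < ∑ i, X i ω} := by
    intro ω hω
    obtain ⟨j, -, hj, hrest⟩ := Set.mem_iUnion₂.1 hω
    exact lt_sum_of_add_card_mul_lt (a := fun i => X i ω) hc (by simpa using hj)
      fun i hi => Set.mem_iInter₂.1 hrest i (mem_erase.2 ⟨hi, mem_univ i⟩)
  have hEtail : ∀ j, E j ⊆ {ω | c < X j ω} := by
    intro j ω hω
    have hj : x + n * c < X j ω := hω.1
    have hnc : 0 ≤ (n : ℝ) * c := by positivity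
    show c < X j ω
    linarith
  calc (∑ i, tailP μ (X i) (x + n * c)) * (1 - leftTailSum μ X c)
      = ∑ j, tailP μ (X j) (x + n * c) * (1 - leftTailSum μ X c) := sum_mul _ _ _
    _ ≤ ∑ j, μ.real (E j) :=
        sum_le_sum fun j _ => tailP_mul_one_sub_leftTailSum_le hindep j c _
    _ ≤ μ.real (⋃ j ∈ univ, E j) + ∑ i, ∑ j ∈ univ.erase i, μ.real (E i ∩ E j) :=
        sum_measureReal_le_measureReal_biUnion_add_sum_inter hEm univ
    _ ≤ tailP μ (fun ω => ∑ i, X i ω) x + pairTailSum μ X c :=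
        add_le_add (measureReal_mono hEsum) (sum_measureReal_inter_le_pairTailSum hindep hEtail)

end Tails

section Asymptotics

variable {Ω : Type*} [MeasurableSpace Ω] {μ : Measure Ω} [IsFiniteMeasure μ] {n : ℕ} [NeZero n]
  {X : Fin n → Ω → ℝ} (hXm : ∀ i, Measurable (X i))
  (hindep : Pairwise fun i j => IndepFun (X i) (X j) μ) {c : ℝ → ℝ}
  (hT : ∀ᶠ x in atTop, 0 < tailP μ (maxRV X) x)
  (hN : Tendsto (fun x => pairTailSum μ X (c x) / tailP μ (maxRV X) x) atTop (𝓝 0))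
include hXm hindep hT hN

theorem tendsto_sum_tailP_div_tailP_maxRV (hcx : ∀ᶠ x in atTop, c x ≤ x) :
    Tendsto (fun x => (∑ i, tailP μ (X i) x) / tailP μ (maxRV X) x) atTop (𝓝 1) := by
  refine tendsto_of_tendsto_of_tendsto_of_le_of_le' tendsto_const_nhds
    (by simpa using hN.const_add 1) ?_ ?_
  · filter_upwards [hT] with x hx
    rw [le_div_iff₀ hx, one_mul]
    exact tailP_maxRV_le_sum x
  · filter_upwards [hT, hcx] with x hx hx'
    rw [one_add_div hx.ne', div_le_div_iff_of_pos_right hx]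
    exact sum_tailP_le_tailP_maxRV_add_pairTailSum hindep hXm hx'

theorem tendsto_tailP_sum_div_tailP_maxRV (hc : ∀ᶠ x in atTop, 0 ≤ c x ∧ c x ≤ x)
    (hright : Tendsto (fun x => tailP μ (maxRV X) (x + n * c x) / tailP μ (maxRV X) x)
      atTop (𝓝 1))
    (hleft : Tendsto (fun x => tailP μ (maxRV X) (x - n * c x) / tailP μ (maxRV X) x)
      atTop (𝓝 1))
    (hδ : Tendsto (fun x => leftTailSum μ X (c x)) atTop (𝓝 0)) :
    Tendsto (fun x => tailP μ (fun ω => ∑ i, X i ω) x / tailP μ (maxRV X) x) atTop (𝓝 1) := by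
  set T := tailP μ (maxRV X)
  have hlo : Tendsto (fun x => (T (x + n * c x) * (1 - leftTailSum μ X (c x))
      - pairTailSum μ X (c x)) / T x) atTop (𝓝 1) := by
    have := (hright.mul (hδ.const_sub 1)).sub hN
    simp only [sub_zero, mul_one] at this
    refine this.congr fun x => ?_
    rw [sub_div, div_mul_eq_mul_div]
  have hhi : Tendsto (fun x => (T (x - n * c x) + pairTailSum μ X (c x)) / T x) atTop (𝓝 1) := by
    simpa only [add_div, add_zero] using hleft.add hN
  refine tendsto_of_tendsto_of_tendsto_of_le_of_le' hlo hhi ?_ ?_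
  · filter_upwards [hT, hc, hδ.eventually (eventually_le_nhds one_pos)] with x hx ⟨hc0, hcx⟩ hδ1
    gcongr
    have hTS : T (x + n * c x) * (1 - leftTailSum μ X (c x)) ≤
        (∑ i, tailP μ (X i) (x + n * c x)) * (1 - leftTailSum μ X (c x)) :=
      mul_le_mul_of_nonneg_right (tailP_maxRV_le_sum _) (by linarith)
    linarith [sum_tailP_mul_one_sub_leftTailSum_le hindep hXm hc0 hcx]
  · filter_upwards [hT, hc] with x hx ⟨hc0, _⟩
    gcongr
    exact tailP_sum_le_tailP_maxRV_add_pairTailSum hindep hc0 x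

end Asymptotics

open ProbabilityTheory in
/-- Corollary 3.3(b): independent risks with long-tailed maximum, some
`h ∈ 𝓗*_{X_{n:n}}` satisfying (IDS2), are max-sum equivalent. -/
theorem max_sum_equivalent_of_scale_class
    {Ω : Type*} [MeasurableSpace Ω] (μ : Measure Ω) [IsProbabilityMeasure μ]
    {n : ℕ} [NeZero n] (X : Fin n → Ω → ℝ) (hXm : ∀ i, Measurable (X i))
    (hindep : iIndepFun (m := fun _ : Fin n => Real.measurableSpace) X μ)
    (hL : LongTailedT (tailP μ (maxRV X)))
    (h : ℝ → ℝ) (hH : MemScaleClass (tailP μ (maxRV X)) h)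
    (hinf : Tendsto h atTop atTop)
    (hIDS2 : ∃ L : ℝ, 0 < L ∧ ∀ i j : Fin n, i ≠ j →
      Tendsto (fun x =>
          tailP μ (X i) (L * h x) * tailP μ (X j) (L * h x) / tailP μ (maxRV X) x)
        atTop (𝓝 0)) :
    Tendsto (fun x =>
        tailP μ (fun ω => ∑ i, X i ω) x / ∑ i, tailP μ (X i) x) atTop (𝓝 1) := by
  obtain ⟨L, hLpos, hIDS2⟩ := hIDS2
  obtain ⟨hhpos, hho, hshift, -⟩ := hH
  have hpair : Pairwise fun i j => IndepFun (X i) (X j) μ := fun _ _ hij => hindep.indepFun hij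
  have hT : ∀ᶠ x in atTop, 0 < tailP μ (maxRV X) x := eventually_atTop.2 ⟨0, hL.1⟩
  have hc : ∀ᶠ x in atTop, 0 ≤ L * h x ∧ L * h x ≤ x := by
    filter_upwards [hhpos, (hho.const_mul_left L).bound zero_lt_one, eventually_ge_atTop 0]
      with x hpos hle hx
    refine ⟨by positivity, ?_⟩
    rw [one_mul, Real.norm_of_nonneg hx] at hle
    exact (Real.le_norm_self _).trans hle
  have hshiftL : ∀ y : ℝ, Tendsto (fun x => tailP μ (maxRV X) (x + y * (L * h x)) /
      tailP μ (maxRV X) x) atTop (𝓝 1) := fun y => by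
    simpa only [mul_assoc] using hshift (y * L)
  have hN : Tendsto (fun x => pairTailSum μ X (L * h x) / tailP μ (maxRV X) x) atTop (𝓝 0) := by
    have := tendsto_finsetSum univ fun i _ =>
      tendsto_finsetSum (univ.erase i) fun j hj => hIDS2 i j (ne_of_mem_erase hj).symm
    simp only [sum_const_zero] at this
    simpa only [pairTailSum, sum_div] using this
  have hGT := tendsto_tailP_sum_div_tailP_maxRV hXm hpair hT hN hc (hshiftL n)
    (by simpa [sub_eq_add_neg] using hshiftL (-n))
    ((tendsto_leftTailSum_atTop hXm).comp (hinf.const_mul_atTop hLpos))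
  have hST := tendsto_sum_tailP_div_tailP_maxRV hXm hpair hT hN (hc.mono fun _ => And.right)
  have hGS := hGT.div hST one_ne_zero
  rw [div_one] at hGS
  refine hGS.congr' ?_
  filter_upwards [hT] with x hx
  exact div_div_div_cancel_right₀ hx.ne' _ _
end

section
/- Let X_1,...,X_n be n real-valued random variables with maximum X_{n:n} = max(X_1,...,X_n), and assume condition (v1): lim_{x→∞} P(X_i > x, X_j > x)/P(X_{n:n} > x) = 0 for all 1 ≤ i < j ≤ n. If X_i is long-tailed (X_i ∈ 𝓛) for every 1 ≤ i ≤ n, then X_{n:n} ∈ 𝓛. -/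
open MeasureTheory Filter Topology Asymptotics

/-!
For `x ≤ x'` the event `{x < X_{n:n} ≤ x'}` is covered by the events `{x < X_i ≤ x'}`, so the
increment `T(x) - T(x')` of the tail of the maximum is at most the sum of the increments of the
tails `T_i`, while `T_i ≤ T`. Hence `1 - T(x+y)/T(x) ≤ ∑ (1 - T_i(x+y)/T_i(x)) → 0` for `y ≥ 0`,
and negative shifts follow by inverting the ratio.
-/

lemma longTailedT_of_nonneg_shifts {T : ℝ → ℝ} (hpos : ∀ x, 0 ≤ x → 0 < T x)
    (h : ∀ y, 0 ≤ y → Tendsto (fun x => T (x + y) / T x) atTop (𝓝 1)) : LongTailedT T := by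
  refine ⟨hpos, fun y => ?_⟩
  rcases le_total 0 y with hy | hy
  · exact h y hy
  · have hback : Tendsto (fun x => T (x + y + -y) / T (x + y)) atTop (𝓝 1) :=
      (h (-y) (neg_nonneg.2 hy)).comp (tendsto_atTop_add_const_right atTop y tendsto_id)
    simpa using hback.inv₀ one_ne_zero

lemma longTailedT_of_sub_le_sum {ι : Type*} [Fintype ι] [Nonempty ι] {T : ℝ → ℝ}
    {S : ι → ℝ → ℝ} (hS : ∀ i, LongTailedT (S i)) (hSanti : ∀ i, Antitone (S i))
    (hT : Antitone T) (hST : ∀ i x, S i x ≤ T x)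
    (hinc : ∀ x x', x ≤ x' → T x - T x' ≤ ∑ i, (S i x - S i x')) : LongTailedT T := by
  have hTpos : ∀ x, 0 ≤ x → 0 < T x := fun x hx =>
    ((hS (Classical.arbitrary ι)).1 x hx).trans_le (hST _ x)
  refine longTailedT_of_nonneg_shifts hTpos fun y hy => ?_
  have hlower : Tendsto (fun x => 1 - ∑ i, (1 - S i (x + y) / S i x)) atTop (𝓝 1) := by
    have hsum := tendsto_finsetSum Finset.univ fun i _ =>
      (tendsto_const_nhds (x := (1 : ℝ))).sub ((hS i).2 y)
    simpa using (tendsto_const_nhds (x := (1 : ℝ))).sub hsum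
  refine tendsto_of_tendsto_of_tendsto_of_le_of_le' hlower tendsto_const_nhds ?_ ?_
  · filter_upwards [eventually_ge_atTop 0] with x hx
    have hterm : ∀ i, (S i x - S i (x + y)) / T x ≤ 1 - S i (x + y) / S i x := fun i => by
      have hSix := (hS i).1 x hx
      calc (S i x - S i (x + y)) / T x ≤ (S i x - S i (x + y)) / S i x :=
            div_le_div_of_nonneg_left (sub_nonneg.2 (hSanti i (by linarith))) hSix (hST i x)
        _ = 1 - S i (x + y) / S i x := by rw [sub_div, div_self hSix.ne']
    have hTx := hTpos x hx
    have hsum : 1 - T (x + y) / T x ≤ ∑ i, (1 - S i (x + y) / S i x) :=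
      calc 1 - T (x + y) / T x = (T x - T (x + y)) / T x := by rw [sub_div, div_self hTx.ne']
        _ ≤ (∑ i, (S i x - S i (x + y))) / T x := by
            gcongr; exact hinc x (x + y) (by linarith)
        _ = ∑ i, (S i x - S i (x + y)) / T x := Finset.sum_div _ _ _
        _ ≤ ∑ i, (1 - S i (x + y) / S i x) := Finset.sum_le_sum fun i _ => hterm i
    linarith
  · filter_upwards [eventually_ge_atTop 0] with x hx
    exact div_le_one_of_le₀ (hT (by linarith)) (hTpos x hx).le

lemma le_maxRV {Ω : Type*} {n : ℕ} (X : Fin n → Ω → ℝ) (i : Fin n) (ω : Ω) :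
    X i ω ≤ maxRV X ω :=
  le_ciSup (f := fun j => X j ω) (Set.finite_range _).bddAbove i

section Tails

variable {Ω : Type*} [MeasurableSpace Ω] {μ : Measure Ω} [IsFiniteMeasure μ] {n : ℕ}

lemma tailP_antitone (Y : Ω → ℝ) : Antitone (tailP μ Y) := fun _ _ h =>
  measureReal_mono fun _ hω => h.trans_lt hω

lemma tailP_le_tailP_maxRV (X : Fin n → Ω → ℝ) (i : Fin n) (x : ℝ) :
    tailP μ (X i) x ≤ tailP μ (maxRV X) x :=
  measureReal_mono fun ω (hω : x < X i ω) => hω.trans_le (le_maxRV X i ω)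

lemma tailP_maxRV_sub_le_sum [NeZero n] {X : Fin n → Ω → ℝ} (hX : ∀ i, Measurable (X i))
    {x x' : ℝ} (hxx' : x ≤ x') :
    tailP μ (maxRV X) x - tailP μ (maxRV X) x' ≤ ∑ i, (tailP μ (X i) x - tailP μ (X i) x') := by
  have hcover : {ω | x < maxRV X ω} \ {ω | x' < maxRV X ω}
      ⊆ ⋃ i, {ω | x < X i ω} \ {ω | x' < X i ω} := by
    rintro ω ⟨hx, hx'⟩
    obtain ⟨i, hi⟩ := (lt_ciSup_iff (f := fun j => X j ω) (Set.finite_range _).bddAbove).1 hx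
    exact Set.mem_iUnion.2 ⟨i, hi, fun h => hx' (h.trans_le (le_maxRV X i ω))⟩
  calc tailP μ (maxRV X) x - tailP μ (maxRV X) x'
      ≤ μ.real ({ω | x < maxRV X ω} \ {ω | x' < maxRV X ω}) := le_measureReal_sdiff
    _ ≤ μ.real (⋃ i, {ω | x < X i ω} \ {ω | x' < X i ω}) := measureReal_mono hcover
    _ ≤ ∑ i, μ.real ({ω | x < X i ω} \ {ω | x' < X i ω}) := measureReal_iUnion_fintype_le _
    _ = ∑ i, (tailP μ (X i) x - tailP μ (X i) x') := by
        refine Finset.sum_congr rfl fun i _ => measureReal_sdiff ?_ (hX i measurableSet_Ioi)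
        exact fun ω (hω : x' < X i ω) => hxx'.trans_lt hω

end Tails

theorem max_long_tailed_of_v1_general
    {Ω : Type*} [MeasurableSpace Ω] (μ : Measure Ω) [IsProbabilityMeasure μ]
    {n : ℕ} [NeZero n] (X : Fin n → Ω → ℝ) (hXm : ∀ i, Measurable (X i))
    (hL : ∀ i, LongTailedT (tailP μ (X i))) :
    LongTailedT (tailP μ (maxRV X)) :=
  longTailedT_of_sub_le_sum hL (fun i => tailP_antitone (X i)) (tailP_antitone (maxRV X))
    (tailP_le_tailP_maxRV X) fun _ _ => tailP_maxRV_sub_le_sum hXm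

/-- Lemma 4.1(b), long-tailed case: under (v1), if every `X_i ∈ 𝓛` then
`X_{n:n} ∈ 𝓛`. -/
theorem max_long_tailed_of_v1
    {Ω : Type*} [MeasurableSpace Ω] (μ : Measure Ω) [IsProbabilityMeasure μ]
    {n : ℕ} [NeZero n] (X : Fin n → Ω → ℝ) (hXm : ∀ i, Measurable (X i))
    (hv1 : CondV1 μ X)
    (hL : ∀ i, LongTailedT (tailP μ (X i))) :
    LongTailedT (tailP μ (maxRV X)) :=
  max_long_tailed_of_v1_general μ X hXm hL
end
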